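/- arXiv:2411.00256 — 6 statements merged into one kernel-verified Lean document; each statement's English description precedes it below -/
import Mathlib

section
/- For positive reals α, v and real η with α ≥ η²/v, the function g(r) = α·log(v·r + α) − η²·r/(v·r + α) attains its minimum over [0, ∞) at r = 0. -/
/-- If `α ≥ η²/v`, then `g(r) = α·log(v·r + α) − η²·r/(v·r + α)` attains its
minimum over `[0, ∞)` at `r = 0`. -/
theorem stmt_2 (α v η : ℝ) (hα : 0 < α) (hv : 0 < v) (h : η ^ 2 / v ≤ α) :
    IsMinOn (fun r : ℝ => α * Real.log (v * r + α) - η ^ 2 * r / (v * r + α))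
      (Set.Ici 0) 0 := by
  intro r hr
  simp only [Set.mem_Ici] at hr
  simp only [Set.mem_setOf_eq, mul_zero, zero_add, zero_div, sub_zero]
  have hs : 0 < v * r + α := by positivity
  have hηv : η ^ 2 ≤ α * v := by
    rw [div_le_iff₀ hv] at h; linarith
  -- log(vr+α) - log α ≥ 1 - α/(vr+α) = vr/(vr+α)
  have hlog : v * r / (v * r + α) ≤ Real.log (v * r + α) - Real.log α := by
    have h1 : Real.log (α / (v * r + α)) ≤ α / (v * r + α) - 1 :=
      Real.log_le_sub_one_of_pos (by positivity)
    rw [Real.log_div (ne_of_gt hα) (ne_of_gt hs)] at h1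
    have h2 : 1 - α / (v * r + α) = v * r / (v * r + α) := by
      field_simp
      ring
    linarith
  have h3 : η ^ 2 * r / (v * r + α) ≤ α * (v * r) / (v * r + α) :=
    by rw [div_le_div_iff₀ hs hs]; nlinarith [mul_nonneg (mul_nonneg (sub_nonneg.mpr hηv) hr) hs.le]
  have h4 : α * (v * r / (v * r + α)) ≤ α * (Real.log (v * r + α) - Real.log α) :=
    mul_le_mul_of_nonneg_left hlog hα.le
  have h5 : α * (v * r) / (v * r + α) = α * (v * r / (v * r + α)) := by ring
  linarith [h3, h4]
end

section
/- For positive reals α, v and real η with α < η²/v, every r in [0, (η² − αv)/v²) satisfies g(r) > g((η² − αv)/v²); in particular r = 0 is not a minimizer of g on [0, ∞). -/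
open Real Set

/- Substituting `s = v r + α` turns `g` into `s ↦ α log s + (α η² / v) / s`, up to the constant
`η² / v`. By `log x < x - 1`, the map `s ↦ a log s + K / s` strictly decreases on `(0, K / a]`, and
the substitution sends `[0, c]` onto `[α, η² / v]`, which lies in that interval. -/

theorem strictAntiOn_mul_log_add_div {a K : ℝ} (ha : 0 < a) :
    StrictAntiOn (fun s => a * log s + K / s) (Ioc 0 (K / a)) := by
  rintro s ⟨hs, -⟩ t ⟨ht, htK⟩ hst
  have hlog : log (t / s) < t / s - 1 :=
    log_lt_sub_one_of_pos (div_pos ht hs) (ne_of_gt ((one_lt_div hs).mpr hst))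
  have haK : a * t ≤ K := by rwa [le_div_iff₀ ha, mul_comm] at htK
  rw [log_div ht.ne' hs.ne', div_sub_one hs.ne'] at hlog
  have hfrac : a * ((t - s) / s) ≤ K / s - K / t := by
    rw [div_sub_div _ _ hs.ne' ht.ne', le_div_iff₀ (mul_pos hs ht)]
    have : a * ((t - s) / s) * (s * t) = a * t * (t - s) := by field_simp
    rw [this]
    nlinarith
  show a * log t + K / t < a * log s + K / s
  nlinarith

theorem mul_log_sub_div_eq {α v η r : ℝ} (hv : v ≠ 0) (hr : v * r + α ≠ 0) :
    α * log (v * r + α) - η ^ 2 * r / (v * r + α) =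
      α * log (v * r + α) + α * η ^ 2 / v / (v * r + α) - η ^ 2 / v := by
  field_simp
  ring

theorem strictAntiOn_mul_log_sub_div {α v η : ℝ} (hα : 0 < α) (hv : 0 < v) :
    StrictAntiOn (fun r => α * log (v * r + α) - η ^ 2 * r / (v * r + α))
      (Icc 0 ((η ^ 2 - α * v) / v ^ 2)) := by
  have hpos : ∀ r, 0 ≤ r → 0 < v * r + α := fun r hr => by positivity
  have hmem : ∀ r ∈ Icc 0 ((η ^ 2 - α * v) / v ^ 2), v * r + α ∈ Ioc 0 (α * η ^ 2 / v / α) := by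
    rintro r ⟨hr0, hrc⟩
    refine ⟨hpos r hr0, ?_⟩
    calc v * r + α ≤ v * ((η ^ 2 - α * v) / v ^ 2) + α := by gcongr
      _ = α * η ^ 2 / v / α := by field_simp; ring
  intro r hr s hs hrs
  simp only
  rw [mul_log_sub_div_eq hv.ne' (hpos r hr.1).ne', mul_log_sub_div_eq hv.ne' (hpos s hs.1).ne']
  have := strictAntiOn_mul_log_add_div hα (hmem r hr) (hmem s hs) (by gcongr)
  simp only at this
  linarith

/-- If `α·v < η²`, then with `c = (η² − αv)/v²`, every `r ∈ [0, c)` satisfies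
`g(r) > g(c)`; in particular `r = 0` is not a minimizer of `g` on `[0, ∞)`. -/
theorem stmt_3 (α v η : ℝ) (hα : 0 < α) (hv : 0 < v) (h : α * v < η ^ 2) :
    (∀ r ∈ Set.Ico (0 : ℝ) ((η ^ 2 - α * v) / v ^ 2),
      (fun r : ℝ => α * Real.log (v * r + α) - η ^ 2 * r / (v * r + α)) r >
      (fun r : ℝ => α * Real.log (v * r + α) - η ^ 2 * r / (v * r + α))
        ((η ^ 2 - α * v) / v ^ 2)) ∧
    ¬ IsMinOn (fun r : ℝ => α * Real.log (v * r + α) - η ^ 2 * r / (v * r + α))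
      (Set.Ici 0) 0 := by
  have hc : 0 < (η ^ 2 - α * v) / v ^ 2 := div_pos (by linarith) (by positivity)
  have hlt : ∀ r ∈ Ico (0 : ℝ) ((η ^ 2 - α * v) / v ^ 2),
      (fun r : ℝ => α * log (v * r + α) - η ^ 2 * r / (v * r + α)) r >
      (fun r : ℝ => α * log (v * r + α) - η ^ 2 * r / (v * r + α))
        ((η ^ 2 - α * v) / v ^ 2) := fun r hr =>
    strictAntiOn_mul_log_sub_div hα hv (Ico_subset_Icc_self hr) (right_mem_Icc.mpr hc.le) hr.2
  exact ⟨hlt, fun hmin => (hlt 0 (left_mem_Ico.mpr hc)).not_ge (hmin (mem_Ici.mpr hc.le))⟩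
end

section
/- Let G(r) = Σ_{k=1}^{d} [α·log(v_k·r + α) − η_k²·r/(v_k·r + α)] with α > 0 and v_k > 0 for all k. Then G is monotone decreasing on [0, l] and monotone increasing on [u, ∞), where l = min_k max(0, (η_k² − α·v_k)/v_k²) and u = max_k max(0, (η_k² − α·v_k)/v_k²). Consequently G attains a global minimum over [0, ∞) at some point in [l, u]. -/
open Set

lemma stmt4_deriv (α v e : ℝ) (hα : 0 < α) (hv : 0 < v) (r : ℝ) (hr : 0 ≤ r) :
    HasDerivAt (fun r => α * Real.log (v * r + α) - e * r / (v * r + α))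
      (α * (v * (v * r + α) - e) / (v * r + α) ^ 2) r := by
  have hpos : 0 < v * r + α := by positivity
  have h1 : HasDerivAt (fun r => v * r + α) v r := by
    simpa using ((hasDerivAt_id r).const_mul v).add_const α
  have hlog : HasDerivAt (fun r => α * Real.log (v * r + α)) (α * (v / (v * r + α))) r :=
    (h1.log hpos.ne').const_mul α
  have hdiv : HasDerivAt (fun r => e * r / (v * r + α))
      ((e * (v * r + α) - e * r * v) / (v * r + α) ^ 2) r := by
    simpa [Pi.div_def] using ((hasDerivAt_id r).const_mul e).div h1 hpos.ne'
  refine (hlog.fun_sub hdiv).congr_deriv ?_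
  field_simp
  ring

/-- `G(r) = Σ_k [α·log(v_k·r + α) − η_k²·r/(v_k·r + α)]` is antitone on `[0, l]`
and monotone on `[u, ∞)`, where `l`/`u` are the min/max over `k` of
`max 0 ((η_k² − α·v_k)/v_k²)`; consequently `G` attains a global minimum over
`[0, ∞)` at some point of `[l, u]`. -/
theorem stmt_4 (d : ℕ) (hd : 0 < d) (α : ℝ) (hα : 0 < α)
    (v η : Fin d → ℝ) (hv : ∀ k, 0 < v k) :
    let G : ℝ → ℝ := fun r =>
      ∑ k, (α * Real.log (v k * r + α) - (η k) ^ 2 * r / (v k * r + α))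
    let l : ℝ := Finset.univ.inf' ⟨⟨0, hd⟩, Finset.mem_univ _⟩
      (fun k : Fin d => max 0 ((η k ^ 2 - α * v k) / (v k) ^ 2))
    let u : ℝ := Finset.univ.sup' ⟨⟨0, hd⟩, Finset.mem_univ _⟩
      (fun k : Fin d => max 0 ((η k ^ 2 - α * v k) / (v k) ^ 2))
    AntitoneOn G (Set.Icc 0 l) ∧ MonotoneOn G (Set.Ici u) ∧
      ∃ r ∈ Set.Icc l u, IsMinOn G (Set.Ici 0) r := by
  intro G l u
  have k0 : Fin d := ⟨0, hd⟩
  set m : Fin d → ℝ := fun k => max 0 ((η k ^ 2 - α * v k) / (v k) ^ 2) with hm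
  have hl_le : ∀ k, l ≤ m k := fun k => Finset.inf'_le _ (Finset.mem_univ k)
  have hu_ge : ∀ k, m k ≤ u := fun k => Finset.le_sup' _ (Finset.mem_univ k)
  have hl0 : 0 ≤ l := Finset.le_inf' _ _ (fun k _ => le_max_left _ _)
  have hlu : l ≤ u := (hl_le k0).trans (hu_ge k0)
  have hu0 : 0 ≤ u := hl0.trans hlu
  have hG : ∀ r : ℝ, 0 ≤ r → HasDerivAt G
      (∑ k, α * (v k * (v k * r + α) - (η k) ^ 2) / (v k * r + α) ^ 2) r :=
    fun r hr => HasDerivAt.fun_sum (fun k _ => stmt4_deriv α (v k) ((η k) ^ 2) hα (hv k) r hr)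
  have hGc : ContinuousOn G (Ici 0) :=
    fun r hr => ((hG r hr).continuousAt).continuousWithinAt
  have hA : AntitoneOn G (Icc 0 l) := by
    apply antitoneOn_of_deriv_nonpos (convex_Icc _ _)
    · exact hGc.mono (Icc_subset_Ici_self)
    · intro x hx
      rw [interior_Icc] at hx
      exact ((hG x hx.1.le).differentiableAt).differentiableWithinAt
    · intro x hx
      rw [interior_Icc] at hx
      rw [(hG x hx.1.le).deriv]
      apply Finset.sum_nonpos
      intro k _
      have hxm : x < m k := lt_of_lt_of_le hx.2 (hl_le k)
      have hxr : x < (η k ^ 2 - α * v k) / (v k) ^ 2 := by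
        rcases lt_max_iff.mp hxm with h | h
        · linarith [hx.1]
        · exact h
      have h2 : x * (v k) ^ 2 ≤ η k ^ 2 - α * v k :=
        (le_div_iff₀ (pow_pos (hv k) 2)).mp hxr.le
      apply div_nonpos_of_nonpos_of_nonneg
      · nlinarith
      · positivity
  have hM : MonotoneOn G (Ici u) := by
    apply monotoneOn_of_deriv_nonneg (convex_Ici _)
    · exact hGc.mono (fun x hx => hu0.trans hx)
    · intro x hx
      rw [interior_Ici] at hx
      exact ((hG x (hu0.trans hx.le)).differentiableAt).differentiableWithinAt
    · intro x hx
      rw [interior_Ici] at hx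
      rw [(hG x (hu0.trans hx.le)).deriv]
      apply Finset.sum_nonneg
      intro k _
      have hxm : m k < x := lt_of_le_of_lt (hu_ge k) hx
      have hxr : (η k ^ 2 - α * v k) / (v k) ^ 2 ≤ x :=
        ((le_max_right _ _).trans_lt hxm).le
      have h2 : η k ^ 2 - α * v k ≤ x * (v k) ^ 2 :=
        (div_le_iff₀ (pow_pos (hv k) 2)).mp hxr
      apply div_nonneg
      · nlinarith
      · positivity
  obtain ⟨r₀, hr₀, hmin⟩ := isCompact_Icc.exists_isMinOn (Set.nonempty_Icc.mpr hlu)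
    (hGc.mono (fun x hx => hl0.trans hx.1))
  have hmin' := isMinOn_iff.mp hmin
  refine ⟨hA, hM, r₀, hr₀, isMinOn_iff.mpr fun x hx => ?_⟩
  rcases le_total x l with h | h
  · calc G r₀ ≤ G l := hmin' l (left_mem_Icc.mpr hlu)
    _ ≤ G x := hA ⟨hx, h⟩ ⟨hl0, le_refl l⟩ h
  rcases le_total u x with h' | h'
  · calc G r₀ ≤ G u := hmin' u (right_mem_Icc.mpr hlu)
    _ ≤ G x := hM self_mem_Ici h' h'
  · exact hmin' x ⟨h, h'⟩
end

section
/- Under the setup of the univariate objective G, if α < min_k (η_k²/v_k) then every global minimizer of G over [0, ∞) is strictly positive (and at least min_k (η_k² − α·v_k)/v_k²). -/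
/-- If `α·v_k < η_k²` for every `k`, then every global minimizer of `G` over
`[0, ∞)` is strictly positive, and at least `l = min_k (η_k² − α·v_k)/v_k²`. -/
theorem stmt_6 (d : ℕ) (hd : 0 < d) (α : ℝ) (hα : 0 < α)
    (v η : Fin d → ℝ) (hv : ∀ k, 0 < v k) (h : ∀ k, α * v k < (η k) ^ 2) :
    let G : ℝ → ℝ := fun r =>
      ∑ k, (α * Real.log (v k * r + α) - (η k) ^ 2 * r / (v k * r + α))
    let l : ℝ := Finset.univ.inf' ⟨⟨0, hd⟩, Finset.mem_univ _⟩
      (fun k : Fin d => (η k ^ 2 - α * v k) / (v k) ^ 2)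
    ∀ r ∈ Set.Ici (0 : ℝ), IsMinOn G (Set.Ici 0) r → 0 < r ∧ l ≤ r := by
  intro G l r hr hmin
  have : Nonempty (Fin d) := ⟨⟨0, hd⟩⟩
  have hlpos : 0 < l := by
    rw [show l = Finset.univ.inf' ⟨⟨0, hd⟩, Finset.mem_univ _⟩
      (fun k : Fin d => (η k ^ 2 - α * v k) / (v k) ^ 2) from rfl]
    refine (Finset.lt_inf'_iff _).mpr ?_
    intro k _
    exact div_pos (by linarith [h k]) (pow_pos (hv k) 2)
  have hderiv : ∀ x : ℝ, 0 ≤ x → HasDerivAt G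
      (∑ k, (α * v k / (v k * x + α) - (η k) ^ 2 * α / (v k * x + α) ^ 2)) x := by
    intro x hx
    apply HasDerivAt.fun_sum
    intro k _
    have hD : 0 < v k * x + α := add_pos_of_nonneg_of_pos (mul_nonneg (hv k).le hx) hα
    have h1 : HasDerivAt (fun y : ℝ => v k * y + α) (v k) x := by
      simpa using ((hasDerivAt_id x).const_mul (v k)).add_const α
    have hlog : HasDerivAt (fun y : ℝ => α * Real.log (v k * y + α))
        (α * (v k / (v k * x + α))) x := (h1.log hD.ne').const_mul α
    have hnum : HasDerivAt (fun y : ℝ => (η k) ^ 2 * y) ((η k) ^ 2) x := by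
      simpa using (hasDerivAt_id x).const_mul ((η k) ^ 2)
    have hq : HasDerivAt (fun y : ℝ => (η k) ^ 2 * y / (v k * y + α))
        (((η k) ^ 2 * (v k * x + α) - (η k) ^ 2 * x * v k) / (v k * x + α) ^ 2) x :=
      hnum.div h1 hD.ne'
    have := hlog.sub hq
    convert this using 1
    field_simp
    ring_nf
    funext y
    simp only [Pi.sub_apply]
    ring
    field_simp
    ring
  have hanti : StrictAntiOn G (Set.Icc 0 l) := by
    apply strictAntiOn_of_deriv_neg (convex_Icc 0 l)
    · intro x hx
      exact (hderiv x hx.1).continuousAt.continuousWithinAt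
    · intro x hx
      rw [interior_Icc] at hx
      rw [(hderiv x hx.1.le).deriv]
      apply Finset.sum_neg _ Finset.univ_nonempty
      intro k _
      have hD : 0 < v k * x + α := add_pos_of_nonneg_of_pos (mul_nonneg (hv k).le hx.1.le) hα
      have hll : l ≤ (η k ^ 2 - α * v k) / (v k) ^ 2 :=
        Finset.inf'_le _ (Finset.mem_univ k)
      have hxk : x < (η k ^ 2 - α * v k) / (v k) ^ 2 := lt_of_lt_of_le hx.2 hll
      have key : v k * (v k * x + α) < (η k) ^ 2 := by
        have := (lt_div_iff₀ (pow_pos (hv k) 2)).mp hxk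
        nlinarith
      have heq : α * v k / (v k * x + α) - (η k) ^ 2 * α / (v k * x + α) ^ 2
          = α * (v k * (v k * x + α) - (η k) ^ 2) / (v k * x + α) ^ 2 := by
        field_simp
      rw [heq]
      exact div_neg_of_neg_of_pos (mul_neg_of_pos_of_neg hα (by linarith)) (pow_pos hD 2)
  have hlr : l ≤ r := by
    by_contra hrl
    push_neg at hrl
    have h1 : G r ≤ G l := isMinOn_iff.mp hmin l (Set.mem_Ici.mpr hlpos.le)
    have h2 : G l < G r := hanti ⟨hr, hrl.le⟩ ⟨hlpos.le, le_refl l⟩ hrl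
    linarith
  exact ⟨lt_of_lt_of_le hlpos hlr, hlr⟩
end

section
/- For fixed r² > 0, the function (μ, Φ) ↦ (1/α)[‖y − Zμ‖² + tr(Φ ZᵀZ)] + d·log r² − log det Φ + (‖μ‖² + tr Φ)/r², over μ ∈ ℝ^d and Φ symmetric positive definite, is uniquely minimized at μ* = r²·(r²·ZᵀZ + α·I)⁻¹·Zᵀy and Φ* = α·r²·(r²·ZᵀZ + α·I)⁻¹. -/
open Matrix

section Stmt8Aux

variable {d : ℕ}

lemma stmt8_posDef_smul {c : ℝ} (hc : 0 < c) {A : Matrix (Fin d) (Fin d) ℝ} (hA : A.PosDef) :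
    (c • A).PosDef := by
  refine Matrix.PosDef.of_dotProduct_mulVec_pos ?_ (fun x hx => ?_)
  · unfold Matrix.IsHermitian
    rw [conjTranspose_smul, hA.1.eq]; simp
  · rw [smul_mulVec, dotProduct_smul]
    exact mul_pos hc (hA.dotProduct_mulVec_pos hx)

lemma stmt8_posSemidef_smul {c : ℝ} (hc : 0 ≤ c) {A : Matrix (Fin d) (Fin d) ℝ}
    (hA : A.PosSemidef) : (c • A).PosSemidef := by
  refine Matrix.PosSemidef.of_dotProduct_mulVec_nonneg ?_ (fun x => ?_)
  · unfold Matrix.IsHermitian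
    rw [conjTranspose_smul, hA.1.eq]; simp
  · rw [smul_mulVec, dotProduct_smul]
    exact mul_nonneg hc (hA.dotProduct_mulVec_nonneg x)

lemma stmt8_posDef_conj {A B : Matrix (Fin d) (Fin d) ℝ} (hA : A.PosDef) (hB : B.IsHermitian)
    (hBdet : IsUnit B.det) : (B * A * B).PosDef := by
  refine Matrix.PosDef.of_dotProduct_mulVec_pos ?_ (fun x hx => ?_)
  · unfold Matrix.IsHermitian
    rw [conjTranspose_mul, conjTranspose_mul, hA.1.eq, hB.eq, mul_assoc]
  · have hinj : Function.Injective (B.mulVec) :=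
      mulVec_injective_iff_isUnit.mpr ((isUnit_iff_isUnit_det B).mpr hBdet)
    have hBx : B *ᵥ x ≠ 0 := by
      intro h
      exact hx (hinj (by simpa using h))
    have hpos := hA.dotProduct_mulVec_pos hBx
    rw [star_trivial] at hpos ⊢
    have hxB : x ᵥ* B = B *ᵥ x := by
      rw [← mulVec_transpose]
      have : Bᵀ = B := by
        have := hB.eq
        rwa [conjTranspose_eq_transpose_of_trivial] at this
      rw [this]
    calc x ⬝ᵥ (B * A * B) *ᵥ x
        = x ⬝ᵥ (B *ᵥ ((A * B) *ᵥ x)) := by rw [mulVec_mulVec, mul_assoc]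
      _ = (x ᵥ* B) ⬝ᵥ ((A * B) *ᵥ x) := by rw [dotProduct_mulVec]
      _ = (B *ᵥ x) ⬝ᵥ (A *ᵥ (B *ᵥ x)) := by rw [hxB, mulVec_mulVec]
      _ > 0 := hpos

lemma stmt8_trace_sub_log_det {S : Matrix (Fin d) (Fin d) ℝ} (hS : S.PosDef) :
    (d : ℝ) ≤ S.trace - Real.log S.det ∧ (S.trace - Real.log S.det = d → S = 1) := by
  have hH := hS.isHermitian
  set lam := hH.eigenvalues with hlam
  have hpos : ∀ i, 0 < lam i := hS.eigenvalues_pos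
  have htrace : S.trace = ∑ i, lam i := by
    conv_lhs => rw [hH.spectral_theorem]
    rw [Unitary.conjStarAlgAut_apply, trace_mul_cycle]
    have hU : (star (hH.eigenvectorUnitary : Matrix (Fin d) (Fin d) ℝ)) *
        (hH.eigenvectorUnitary : Matrix (Fin d) (Fin d) ℝ) = 1 := hH.eigenvectorUnitary.2.1
    rw [hU, one_mul, trace_diagonal]
    simp [hlam]
  have hdet : S.det = ∏ i, lam i := by
    rw [hH.det_eq_prod_eigenvalues]; simp [hlam]
  have hlog : Real.log S.det = ∑ i, Real.log (lam i) := by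
    rw [hdet, Real.log_prod (fun i _ => (hpos i).ne')]
  have key : S.trace - Real.log S.det = ∑ i, (lam i - Real.log (lam i)) := by
    rw [htrace, hlog, Finset.sum_sub_distrib]
  have hterm : ∀ i, (1:ℝ) ≤ lam i - Real.log (lam i) := fun i => by
    have := Real.log_le_sub_one_of_pos (hpos i); linarith
  constructor
  · rw [key]
    calc (d:ℝ) = ∑ _i : Fin d, (1:ℝ) := by simp
      _ ≤ ∑ i, (lam i - Real.log (lam i)) := Finset.sum_le_sum (fun i _ => hterm i)
  · intro heq
    have hz : ∑ i, (lam i - Real.log (lam i) - 1) = 0 := by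
      rw [Finset.sum_sub_distrib, ← key, heq]; simp
    have hall : ∀ i ∈ Finset.univ, lam i - Real.log (lam i) - 1 = 0 := by
      refine (Finset.sum_eq_zero_iff_of_nonneg (fun i _ => by have := hterm i; linarith)).mp hz
    have hone : ∀ i, lam i = 1 := by
      intro i
      by_contra hne
      have := Real.log_lt_sub_one_of_pos (hpos i) hne
      have h2 := hall i (Finset.mem_univ i)
      linarith
    have : S = 1 := by
      conv_lhs => rw [hH.spectral_theorem]
      have hdiag : (RCLike.ofReal ∘ lam : Fin d → ℝ) = fun _ => 1 :=
        funext fun i => by simp [hone i]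
      rw [hdiag, diagonal_one, Unitary.conjStarAlgAut_apply, mul_one]
      exact hH.eigenvectorUnitary.2.2
    exact this

open scoped MatrixOrder in
lemma stmt8_mat_min {M Φ : Matrix (Fin d) (Fin d) ℝ} (hM : M.PosDef) (hΦ : Φ.PosDef) :
    (d : ℝ) + Real.log M.det ≤ (Φ * M).trace - Real.log Φ.det ∧
    ((Φ * M).trace - Real.log Φ.det = (d : ℝ) + Real.log M.det → Φ = M⁻¹) := by
  have hMps := hM.posSemidef
  set R := CFC.sqrt M with hRdef
  have hRps : R.PosSemidef := Matrix.nonneg_iff_posSemidef.mp (CFC.sqrt_nonneg M)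
  have hRR : R * R = M := CFC.sqrt_mul_sqrt_self M hMps.nonneg
  have hdetRR : R.det * R.det = M.det := by
    have := congrArg det hRR
    rwa [det_mul] at this
  have hRdet : IsUnit R.det := by
    refine isUnit_iff_ne_zero.mpr (fun h => ?_)
    rw [h, mul_zero] at hdetRR
    exact hM.det_pos.ne (by rw [hdetRR])
  set S := R * Φ * R with hSdef
  have hS : S.PosDef := stmt8_posDef_conj hΦ hRps.isHermitian hRdet
  have htrS : S.trace = (Φ * M).trace := by
    rw [hSdef, trace_mul_cycle, hRR, trace_mul_comm]
  have hdetS : S.det = Φ.det * M.det := by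
    rw [hSdef, det_mul, det_mul, ← hdetRR]; ring
  have hlogS : Real.log S.det = Real.log Φ.det + Real.log M.det := by
    rw [hdetS, Real.log_mul hΦ.det_pos.ne' hM.det_pos.ne']
  obtain ⟨hineq, heqc⟩ := stmt8_trace_sub_log_det hS
  constructor
  · rw [htrS, hlogS] at hineq; linarith
  · intro heq
    have hSone : S = 1 := heqc (by rw [htrS, hlogS]; linarith)
    have h1 : R⁻¹ * S * R⁻¹ = Φ := by
      rw [hSdef, ← mul_assoc, ← mul_assoc, nonsing_inv_mul R hRdet, one_mul,
        mul_assoc, mul_nonsing_inv R hRdet, mul_one]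
    rw [hSone, mul_one] at h1
    rw [← h1, ← Matrix.mul_inv_rev, hRR]

lemma stmt8_quad_diff {M : Matrix (Fin d) (Fin d) ℝ} (hMsym : Mᵀ = M) (μ ν : Fin d → ℝ) :
    (μ - ν) ⬝ᵥ (M *ᵥ (μ - ν)) =
      (μ ⬝ᵥ (M *ᵥ μ) - 2 * ((M *ᵥ ν) ⬝ᵥ μ)) - (ν ⬝ᵥ (M *ᵥ ν) - 2 * ((M *ᵥ ν) ⬝ᵥ ν)) := by
  have h1 : ∀ w v : Fin d → ℝ, w ⬝ᵥ (M *ᵥ v) = (M *ᵥ w) ⬝ᵥ v := fun w v => by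
    rw [dotProduct_mulVec, ← mulVec_transpose, hMsym]
  rw [mulVec_sub, dotProduct_sub, sub_dotProduct, sub_dotProduct,
    h1 ν μ, dotProduct_comm μ (M *ᵥ ν), dotProduct_comm ν (M *ᵥ ν)]
  ring

end Stmt8Aux

/-- For fixed `r² > 0`, the objective
`L(μ, Φ) = (1/α)[‖y − Zμ‖² + tr(Φ ZᵀZ)] + d·log r² − log det Φ + (‖μ‖² + tr Φ)/r²`
over `μ ∈ ℝ^d` and symmetric positive definite `Φ` is uniquely minimized at
`μ* = r²·(r²ZᵀZ + αI)⁻¹Zᵀy` and `Φ* = α·r²·(r²ZᵀZ + αI)⁻¹`. -/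
theorem stmt_8 (n d : ℕ) (hn : 0 < n) (hd : 0 < d)
    (Z : Matrix (Fin n) (Fin d) ℝ) (y : Fin n → ℝ)
    (α r2 : ℝ) (hα : 0 < α) (hr2 : 0 < r2) :
    let L : (Fin d → ℝ) → Matrix (Fin d) (Fin d) ℝ → ℝ := fun μ Φ =>
      (1 / α) * ((∑ i, (y i - (Z *ᵥ μ) i) ^ 2) + (Φ * (Zᵀ * Z)).trace)
        + d * Real.log r2 - Real.log Φ.det + ((∑ i, μ i ^ 2) + Φ.trace) / r2
    let μs : Fin d → ℝ :=
      r2 • ((r2 • (Zᵀ * Z) + α • (1 : Matrix (Fin d) (Fin d) ℝ))⁻¹ *ᵥ (Zᵀ *ᵥ y))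
    let Φs : Matrix (Fin d) (Fin d) ℝ :=
      (α * r2) • (r2 • (Zᵀ * Z) + α • (1 : Matrix (Fin d) (Fin d) ℝ))⁻¹
    ∀ (μ : Fin d → ℝ) (Φ : Matrix (Fin d) (Fin d) ℝ), Φ.IsSymm → Φ.PosDef →
      L μs Φs ≤ L μ Φ ∧ (L μ Φ = L μs Φs → μ = μs ∧ Φ = Φs) := by
  intro L μs Φs μ Φ hsym hpd
  have hαr2 : α * r2 ≠ 0 := by positivity
  set K : Matrix (Fin d) (Fin d) ℝ := r2 • (Zᵀ * Z) + α • 1 with hKdef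
  have hKpd : K.PosDef :=
    Matrix.PosDef.posSemidef_add
      (stmt8_posSemidef_smul hr2.le (posSemidef_conjTranspose_mul_self Z))
      (stmt8_posDef_smul hα Matrix.PosDef.one)
  have hKdet : IsUnit K.det := hKpd.det_pos.ne'.isUnit
  set M : Matrix (Fin d) (Fin d) ℝ := (1/α) • (Zᵀ * Z) + (1/r2) • 1 with hMdef
  have hMpd : M.PosDef :=
    Matrix.PosDef.posSemidef_add
      (stmt8_posSemidef_smul (by positivity) (posSemidef_conjTranspose_mul_self Z))
      (stmt8_posDef_smul (by positivity) Matrix.PosDef.one)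
  have hMdet : IsUnit M.det := hMpd.det_pos.ne'.isUnit
  have hMsym : Mᵀ = M := by
    have := hMpd.1.eq
    rwa [conjTranspose_eq_transpose_of_trivial] at this
  have hKM : K = (α * r2) • M := by
    rw [hKdef, hMdef, smul_add, smul_smul, smul_smul,
      show (α * r2) * (1/α) = r2 by field_simp,
      show (α * r2) * (1/r2) = α by field_simp]
  have hMK : M = (α * r2)⁻¹ • K := by
    rw [hKM, smul_smul, inv_mul_cancel₀ hαr2, one_smul]
  -- Φs = M⁻¹
  have hΦs : Φs = M⁻¹ := by
    have hMΦs : M * Φs = 1 := by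
      show M * ((α * r2) • K⁻¹) = 1
      rw [hMK, smul_mul_assoc, mul_smul_comm, smul_smul, inv_mul_cancel₀ hαr2, one_smul,
        mul_nonsing_inv _ hKdet]
    exact (inv_eq_right_inv hMΦs).symm
  have hΦspd : Φs.PosDef := hΦs ▸ hMpd.inv
  -- M *ᵥ μs = (1/α) • (Zᵀ *ᵥ y)
  have hMμs : M *ᵥ μs = (1/α) • (Zᵀ *ᵥ y) := by
    show M *ᵥ (r2 • (K⁻¹ *ᵥ (Zᵀ *ᵥ y))) = (1/α) • (Zᵀ *ᵥ y)
    rw [hMK, smul_mulVec, mulVec_smul, mulVec_mulVec, mul_nonsing_inv _ hKdet,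
      one_mulVec, smul_smul, show (α * r2)⁻¹ * r2 = 1/α by field_simp]
  -- expansion of the μ-part
  have hFexp : ∀ μ' : Fin d → ℝ,
      (1/α) * (∑ i, (y i - (Z *ᵥ μ') i) ^ 2) + (∑ i, μ' i ^ 2) / r2
        = μ' ⬝ᵥ (M *ᵥ μ') - 2 * ((M *ᵥ μs) ⬝ᵥ μ') + (1/α) * (y ⬝ᵥ y) := by
    intro μ'
    have h1 : (∑ i, (y i - (Z *ᵥ μ') i) ^ 2) = (y - Z *ᵥ μ') ⬝ᵥ (y - Z *ᵥ μ') := by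
      simp [dotProduct, sq]
    have h2 : (∑ i, μ' i ^ 2) = μ' ⬝ᵥ μ' := by simp [dotProduct, sq]
    have h3 : y ⬝ᵥ (Z *ᵥ μ') = (Zᵀ *ᵥ y) ⬝ᵥ μ' := by
      rw [dotProduct_mulVec, mulVec_transpose]
    have h4 : (Z *ᵥ μ') ⬝ᵥ (Z *ᵥ μ') = μ' ⬝ᵥ ((Zᵀ * Z) *ᵥ μ') := by
      rw [dotProduct_mulVec, ← mulVec_transpose, mulVec_mulVec, dotProduct_comm]
    have h5 : μ' ⬝ᵥ (M *ᵥ μ') = (1/α) * (μ' ⬝ᵥ ((Zᵀ * Z) *ᵥ μ')) + (1/r2) * (μ' ⬝ᵥ μ') := by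
      rw [hMdef, add_mulVec, smul_mulVec, smul_mulVec, one_mulVec,
        dotProduct_add, dotProduct_smul, dotProduct_smul, smul_eq_mul, smul_eq_mul]
    have h6 : (M *ᵥ μs) ⬝ᵥ μ' = (1/α) * ((Zᵀ *ᵥ y) ⬝ᵥ μ') := by
      rw [hMμs, smul_dotProduct, smul_eq_mul]
    rw [h1, h2, dotProduct_sub, sub_dotProduct, sub_dotProduct, h5, h6,
      dotProduct_comm (Z *ᵥ μ') y, h3, h4]
    ring
  have hFdiff : ∀ μ' : Fin d → ℝ,
      ((1/α) * (∑ i, (y i - (Z *ᵥ μ') i) ^ 2) + (∑ i, μ' i ^ 2) / r2)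
        - ((1/α) * (∑ i, (y i - (Z *ᵥ μs) i) ^ 2) + (∑ i, μs i ^ 2) / r2)
        = (μ' - μs) ⬝ᵥ (M *ᵥ (μ' - μs)) := by
    intro μ'
    rw [hFexp μ', hFexp μs, stmt8_quad_diff hMsym μ' μs]
    ring
  -- the Φ-part as trace against M
  have hGexp : ∀ Φ' : Matrix (Fin d) (Fin d) ℝ,
      (1/α) * (Φ' * (Zᵀ * Z)).trace + Φ'.trace / r2 = (Φ' * M).trace := by
    intro Φ'
    rw [hMdef, mul_add, trace_add, mul_smul_comm, mul_smul_comm, trace_smul, trace_smul,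
      mul_one, smul_eq_mul, smul_eq_mul]
    ring
  have hΦsval : (Φs * M).trace - Real.log Φs.det = (d : ℝ) + Real.log M.det := by
    rw [hΦs, nonsing_inv_mul _ hMdet, trace_one, det_nonsing_inv, Ring.inverse_eq_inv',
      Real.log_inv]
    simp
  obtain ⟨hGineq, hGeq⟩ := stmt8_mat_min hMpd hpd
  -- split L
  have hsplit : ∀ (μ' : Fin d → ℝ) (Φ' : Matrix (Fin d) (Fin d) ℝ),
      L μ' Φ' = ((1/α) * (∑ i, (y i - (Z *ᵥ μ') i) ^ 2) + (∑ i, μ' i ^ 2) / r2)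
        + ((Φ' * M).trace - Real.log Φ'.det) + d * Real.log r2 := by
    intro μ' Φ'
    show (1 / α) * ((∑ i, (y i - (Z *ᵥ μ') i) ^ 2) + (Φ' * (Zᵀ * Z)).trace)
        + d * Real.log r2 - Real.log Φ'.det + ((∑ i, μ' i ^ 2) + Φ'.trace) / r2 = _
    rw [← hGexp Φ']
    ring
  have hFd := hFdiff μ
  have hFnn : 0 ≤ (μ - μs) ⬝ᵥ (M *ᵥ (μ - μs)) := by
    simpa using hMpd.posSemidef.dotProduct_mulVec_nonneg (μ - μs)
  constructor
  · rw [hsplit μ Φ, hsplit μs Φs]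
    linarith [hGineq, hΦsval, hFd, hFnn]
  · intro heq
    rw [hsplit μ Φ, hsplit μs Φs] at heq
    have hq0 : (μ - μs) ⬝ᵥ (M *ᵥ (μ - μs)) = 0 := by linarith [hGineq, hΦsval, hFd]
    have hμ : μ = μs := by
      by_contra hne
      have hν : μ - μs ≠ 0 := sub_ne_zero.mpr hne
      have := hMpd.dotProduct_mulVec_pos hν
      rw [star_trivial] at this
      linarith
    have hGΦeq : (Φ * M).trace - Real.log Φ.det = (d : ℝ) + Real.log M.det := by
      linarith [hGineq, hΦsval, hFd, hq0]
    exact ⟨hμ, (hGeq hGΦeq).trans hΦs.symm⟩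
end

section
/- Suppose the d×d Gram matrix V = ZᵀZ is diagonal with diagonal entries v_1,…,v_d > 0, and let η = Zᵀy. Then with μ*(r²) = r²·(r²V + αI)⁻¹η and Φ*(r²) = α·r²·(r²V + αI)⁻¹, the profiled objective (1/α)[‖y − Zμ*‖² + tr(Φ* V)] + d·log r² − log det Φ* + (‖μ*‖² + tr Φ*)/r², up to an additive term independent of r², equals (1/α)·Σ_{k=1}^d [α·log(v_k·r² + α) − η_k²·r²/(v_k·r² + α)]. -/
open Matrix

/-- If the Gram matrix `V = ZᵀZ` is diagonal with positive diagonal entries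
`v_k` and `η = Zᵀy`, then the profiled objective at
`μ*(r²) = r²(r²V + αI)⁻¹η`, `Φ*(r²) = αr²(r²V + αI)⁻¹` equals
`(1/α)·Σ_k [α·log(v_k r² + α) − η_k² r²/(v_k r² + α)]` up to an additive
constant not depending on `r²`. -/
theorem stmt_9 (n d : ℕ) (hd : 0 < d)
    (Z : Matrix (Fin n) (Fin d) ℝ) (y : Fin n → ℝ)
    (α : ℝ) (hα : 0 < α) (v : Fin d → ℝ) (hv : ∀ k, 0 < v k)
    (hV : Zᵀ * Z = Matrix.diagonal v) :
    ∃ C : ℝ, ∀ r2 : ℝ, 0 < r2 →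
      (let μs : Fin d → ℝ :=
        r2 • ((r2 • (Zᵀ * Z) + α • (1 : Matrix (Fin d) (Fin d) ℝ))⁻¹ *ᵥ (Zᵀ *ᵥ y))
       let Φs : Matrix (Fin d) (Fin d) ℝ :=
        (α * r2) • (r2 • (Zᵀ * Z) + α • (1 : Matrix (Fin d) (Fin d) ℝ))⁻¹
       (1 / α) * ((∑ i, (y i - (Z *ᵥ μs) i) ^ 2) + (Φs * (Zᵀ * Z)).trace)
         + d * Real.log r2 - Real.log Φs.det
         + ((∑ i, μs i ^ 2) + Φs.trace) / r2)
      = (1 / α) * (∑ k, (α * Real.log (v k * r2 + α)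
          - ((Zᵀ *ᵥ y) k) ^ 2 * r2 / (v k * r2 + α))) + C := by
  have hαne : α ≠ 0 := ne_of_gt hα
  set η : Fin d → ℝ := Zᵀ *ᵥ y with hη
  refine ⟨(∑ i, y i ^ 2) / α + d * (1 - Real.log α), ?_⟩
  intro r2 hr2
  have hr2ne : r2 ≠ 0 := ne_of_gt hr2
  have hw : ∀ k, 0 < v k * r2 + α := fun k => by
    have := hv k
    positivity
  have hwne : ∀ k, v k * r2 + α ≠ 0 := fun k => ne_of_gt (hw k)
  -- the matrix and its inverse
  have hM : r2 • (Zᵀ * Z) + α • (1 : Matrix (Fin d) (Fin d) ℝ)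
      = Matrix.diagonal (fun k => v k * r2 + α) := by
    rw [hV]
    ext i j
    by_cases h : i = j <;>
      simp [Matrix.diagonal_apply, Matrix.one_apply, Matrix.add_apply, h, mul_comm]
  have hMinv : (Matrix.diagonal (fun k => v k * r2 + α) : Matrix (Fin d) (Fin d) ℝ)⁻¹
      = Matrix.diagonal (fun k => (v k * r2 + α)⁻¹) := by
    apply Matrix.inv_eq_right_inv
    rw [Matrix.diagonal_mul_diagonal]
    have : (fun k => (v k * r2 + α) * (v k * r2 + α)⁻¹) = fun _ => (1:ℝ) :=
      funext fun k => mul_inv_cancel₀ (hwne k)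
    rw [this, Matrix.diagonal_one]
  set m : Fin d → ℝ := fun k => r2 * ((v k * r2 + α)⁻¹ * η k) with hm
  have hμ : r2 • ((r2 • (Zᵀ * Z) + α • (1 : Matrix (Fin d) (Fin d) ℝ))⁻¹ *ᵥ η) = m := by
    rw [hM, hMinv]
    funext k
    simp [hm, Matrix.mulVec_diagonal]
  have hΦ : (α * r2) • (r2 • (Zᵀ * Z) + α • (1 : Matrix (Fin d) (Fin d) ℝ))⁻¹
      = Matrix.diagonal (fun k => α * r2 * (v k * r2 + α)⁻¹) := by
    rw [hM, hMinv, ← Matrix.diagonal_smul]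
    congr 1
  simp only [hμ, hΦ]
  -- cross term
  have hcross : ∑ i, y i * (Z *ᵥ m) i = ∑ k, η k * m k := by
    have : y ⬝ᵥ (Z *ᵥ m) = η ⬝ᵥ m := by
      rw [Matrix.dotProduct_mulVec, hη, Matrix.mulVec_transpose]
    simpa [dotProduct] using this
  -- quadratic term
  have hquad : ∑ i, (Z *ᵥ m) i ^ 2 = ∑ k, v k * m k ^ 2 := by
    have : (Z *ᵥ m) ⬝ᵥ (Z *ᵥ m) = (m ᵥ* (Zᵀ * Z)) ⬝ᵥ m := by
      rw [Matrix.dotProduct_mulVec, ← Matrix.vecMul_vecMul, Matrix.vecMul_transpose]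
    rw [hV] at this
    simp only [dotProduct, Matrix.vecMul_diagonal] at this
    calc ∑ i, (Z *ᵥ m) i ^ 2 = ∑ i, (Z *ᵥ m) i * (Z *ᵥ m) i := by
          simp [sq]
      _ = ∑ k, v k * m k ^ 2 := by rw [this]; congr 1; funext k; ring
  have hres : ∑ i, (y i - (Z *ᵥ m) i) ^ 2
      = ∑ i, y i ^ 2 - 2 * ∑ k, η k * m k + ∑ k, v k * m k ^ 2 := by
    rw [← hcross, ← hquad, Finset.mul_sum, ← Finset.sum_sub_distrib, ← Finset.sum_add_distrib]
    exact Finset.sum_congr rfl fun i _ => by ring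
  -- trace terms
  have htr1 : ((Matrix.diagonal (fun k => α * r2 * (v k * r2 + α)⁻¹)) * (Zᵀ * Z)).trace
      = ∑ k, α * r2 * (v k * r2 + α)⁻¹ * v k := by
    rw [hV, Matrix.diagonal_mul_diagonal, Matrix.trace_diagonal]
  have htr2 : (Matrix.diagonal (fun k => α * r2 * (v k * r2 + α)⁻¹)).trace
      = ∑ k, α * r2 * (v k * r2 + α)⁻¹ := Matrix.trace_diagonal _
  -- determinant term
  have hdet : Real.log (Matrix.diagonal (fun k => α * r2 * (v k * r2 + α)⁻¹)).det
      = ∑ k, Real.log (α * r2 * (v k * r2 + α)⁻¹) := by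
    rw [Matrix.det_diagonal, Real.log_prod]
    intro k _
    have := hw k
    positivity
  rw [hres, htr1, htr2, hdet]
  -- now pure real arithmetic with sums
  have hdlog : (d : ℝ) * Real.log r2 = ∑ _k : Fin d, Real.log r2 := by
    simp [Finset.sum_const, nsmul_eq_mul]
  have hdconst : (d : ℝ) * (1 - Real.log α) = ∑ _k : Fin d, (1 - Real.log α) := by
    simp [Finset.sum_const, nsmul_eq_mul, mul_sub]
  have key : ∀ k : Fin d,
      (1 / α) * (-(2 * (η k * m k)) + v k * m k ^ 2 + α * r2 * (v k * r2 + α)⁻¹ * v k)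
        + Real.log r2 - Real.log (α * r2 * (v k * r2 + α)⁻¹)
        + (m k ^ 2 + α * r2 * (v k * r2 + α)⁻¹) / r2
      = (1 / α) * (α * Real.log (v k * r2 + α) - η k ^ 2 * r2 / (v k * r2 + α))
        + (1 - Real.log α) := by
    intro k
    have hlog : Real.log (α * r2 * (v k * r2 + α)⁻¹)
        = Real.log α + Real.log r2 - Real.log (v k * r2 + α) := by
      rw [Real.log_mul (by positivity) (inv_ne_zero (hwne k)), Real.log_mul hαne hr2ne,
        Real.log_inv]
      ring
    have hwk := hwne k
    have hwk2 : r2 * v k + α ≠ 0 := by rwa [mul_comm]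
    rw [hlog, hm]
    simp only
    field_simp
    ring
  calc (1 / α) * ((∑ i, y i ^ 2 - 2 * ∑ k, η k * m k + ∑ k, v k * m k ^ 2)
          + ∑ k, α * r2 * (v k * r2 + α)⁻¹ * v k)
         + (d : ℝ) * Real.log r2 - ∑ k, Real.log (α * r2 * (v k * r2 + α)⁻¹)
         + ((∑ k, m k ^ 2) + ∑ k, α * r2 * (v k * r2 + α)⁻¹) / r2
      = (∑ k, ((1 / α) * (-(2 * (η k * m k)) + v k * m k ^ 2
            + α * r2 * (v k * r2 + α)⁻¹ * v k)
          + Real.log r2 - Real.log (α * r2 * (v k * r2 + α)⁻¹)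
          + (m k ^ 2 + α * r2 * (v k * r2 + α)⁻¹) / r2)) + (∑ i, y i ^ 2) / α := by
        rw [hdlog]
        simp only [Finset.sum_add_distrib, Finset.sum_sub_distrib, ← Finset.mul_sum,
          ← Finset.sum_div, Finset.sum_neg_distrib]
        ring
    _ = (∑ k, ((1 / α) * (α * Real.log (v k * r2 + α) - η k ^ 2 * r2 / (v k * r2 + α))
          + (1 - Real.log α))) + (∑ i, y i ^ 2) / α := by
        rw [Finset.sum_congr rfl fun k _ => key k]
    _ = (1 / α) * (∑ k, (α * Real.log (v k * r2 + α) - η k ^ 2 * r2 / (v k * r2 + α)))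
          + ((∑ i, y i ^ 2) / α + (d : ℝ) * (1 - Real.log α)) := by
        rw [hdconst]
        simp only [Finset.sum_add_distrib, ← Finset.mul_sum]
        ring
end
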